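/- arXiv:1602.06617 — 5 statements merged into one kernel-verified Lean document; each statement's English description precedes it below -/
import Mathlib

section
/- Let H = (a_1,…,a_n; ε_1,…,ε_n) be a naive EGK datum of length n, and let σ be the ℚ-algebra automorphism of ℚ(x,y) fixing y and sending x to x^{−1} (i.e. the substitution X ↦ X^{−1}). Then σ(𝓕(H;Y,X)) = η_n · 𝓕(H;Y,X), where η_n = 1 if n is even and η_n = ε_n if n is odd. -/
/-!
Since `σ` fixes `y`, it commutes with evaluating `𝓕(H;Y,·)` and so acts by `x ↦ x⁻¹`. No induction
is needed: for `n = 1` the sum is palindromic, and for `n ≥ 2` the substitution `x ↦ x⁻¹` swaps the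
two terms of the recursion up to the factor `ζ = η_n`, so the claim reduces to `η_n² = 1`, i.e.
`ε_n = ±1` for odd `n`.
-/

noncomputable section

/-- The ambient field `ℚ(x,y)`. -/
abbrev KK : Type := FractionRing (MvPolynomial (Fin 2) ℚ)

/-- `x = X^{1/2}`. -/
def xx : KK := algebraMap (MvPolynomial (Fin 2) ℚ) KK (MvPolynomial.X 0)

/-- `y = Y^{1/2}`. -/
def yy : KK := algebraMap (MvPolynomial (Fin 2) ℚ) KK (MvPolynomial.X 1)

/-- The invariant `𝔢_i` attached to the sequence `a` (indexed from 1). -/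
def eInv (a : ℕ → ℕ) (i : ℕ) : ℤ :=
  if Odd i then ((∑ j ∈ Finset.Icc 1 i, a j : ℕ) : ℤ)
  else 2 * (((∑ j ∈ Finset.Icc 1 i, a j : ℕ) / 2 : ℕ) : ℤ)

/-- `C(e,ẽ,ξ;Y,X)`, written in terms of the square root `u = X^{1/2}` (and `Y = yy²`). -/
def Cfun (e et : ℤ) (ξ : ℤ) (u : KK) : KK :=
  yy ^ et * u ^ (-(e - et) - 2) * (1 - (ξ : KK) * yy ^ (-2 : ℤ) * u ^ (2 : ℤ)) /
    (u ^ (-2 : ℤ) - u ^ (2 : ℤ))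

/-- `D(e,ẽ,ξ;Y,X)`, in terms of `u = X^{1/2}`. -/
def Dfun (e et : ℤ) (ξ : ℤ) (u : KK) : KK :=
  yy ^ et * u ^ (-(e - et)) / (1 - (ξ : KK) * u ^ (2 : ℤ))

/-- `C_i`: equals `C` if `i` is even and `D` if `i` is odd. -/
def CD (i : ℕ) (e et : ℤ) (ξ : ℤ) (u : KK) : KK :=
  if Even i then Cfun e et ξ u else Dfun e et ξ u

/-- The rational function `𝓕(H;Y,X)`, as a function of `u = X^{1/2}` (with `Y = yy²` fixed). -/
def Fcal (a : ℕ → ℕ) (ε : ℕ → ℤ) : ℕ → KK → KK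
  | 0, _ => 1
  | 1, u => ∑ i ∈ Finset.range (a 1 + 1), u ^ (2 * (i : ℤ) - (a 1 : ℤ))
  | (m + 2), u =>
      CD (m + 2) (eInv a (m + 2)) (eInv a (m + 1))
          (if Even (m + 2) then ε (m + 2) else ε (m + 1)) u
        * Fcal a ε (m + 1) (yy * u)
      + (if Even (m + 2) then 1 else (ε (m + 2) : KK))
        * CD (m + 2) (eInv a (m + 2)) (eInv a (m + 1))
            (if Even (m + 2) then ε (m + 2) else ε (m + 1)) u⁻¹
        * Fcal a ε (m + 1) (yy * u⁻¹)

/-- A naive EGK datum of length `n` (entries indexed by `1,…,n`). -/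
structure IsNaiveEGK (n : ℕ) (a : ℕ → ℕ) (ε : ℕ → ℤ) : Prop where
  mono : ∀ i, 1 ≤ i → i + 1 ≤ n → a i ≤ a (i + 1)
  mem : ∀ i, 1 ≤ i → i ≤ n → ε i = 0 ∨ ε i = 1 ∨ ε i = -1
  n2 : ∀ i, 1 ≤ i → i ≤ n → Even i → (ε i ≠ 0 ↔ Even (∑ j ∈ Finset.Icc 1 i, a j))
  n3 : ∀ i, 1 ≤ i → i ≤ n → Odd i → ε i ≠ 0
  n4 : 1 ≤ n → ε 1 = 1
  n5 : ∀ i, 3 ≤ i → i ≤ n → Odd i → Even (∑ j ∈ Finset.Icc 1 (i - 1), a j) →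
    ε i = ε (i - 1) ^ (a i + a (i - 1)) * ε (i - 2)
/-- `η_j`. -/
def etav (ε : ℕ → ℤ) (j : ℕ) : ℤ := if Even j then 1 else ε j

section Map

variable {F : Type*} [FunLike F KK KK] [RingHomClass F KK KK] (σ : F) (hy : σ yy = yy)
include hy

lemma map_CD (i : ℕ) (e et ξ : ℤ) (u : KK) : σ (CD i e et ξ u) = CD i e et ξ (σ u) := by
  unfold CD Cfun Dfun
  split_ifs <;> simp [map_div₀, map_zpow₀, hy]

lemma map_Fcal (a : ℕ → ℕ) (ε : ℕ → ℤ) : ∀ n : ℕ, ∀ u : KK, σ (Fcal a ε n u) = Fcal a ε n (σ u)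
  | 0, u => by simp [Fcal]
  | 1, u => by simp [Fcal, map_zpow₀]
  | m + 2, u => by
      simp only [Fcal, map_add, map_mul, map_CD σ hy, map_inv₀, hy, map_Fcal a ε (m + 1)]
      split_ifs <;> simp

end Map

lemma Fcal_one_inv (a : ℕ → ℕ) (ε : ℕ → ℤ) (u : KK) : Fcal a ε 1 u⁻¹ = Fcal a ε 1 u := by
  simp only [Fcal]
  rw [← Finset.sum_range_reflect]
  refine Finset.sum_congr rfl fun i hi => ?_
  have hi' : i ≤ a 1 := Nat.lt_succ_iff.mp (Finset.mem_range.mp hi)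
  rw [inv_zpow, ← zpow_neg]
  congr 1
  push_cast [Nat.sub_sub, hi']
  ring

lemma Fcal_add_two_inv (a : ℕ → ℕ) (ε : ℕ → ℤ) (m : ℕ) (hη : etav ε (m + 2) ^ 2 = 1) (u : KK) :
    Fcal a ε (m + 2) u⁻¹ = etav ε (m + 2) * Fcal a ε (m + 2) u := by
  simp only [Fcal, inv_inv, etav] at hη ⊢
  split_ifs at hη ⊢
  · push_cast; ring
  · have hη' : (ε (m + 2) : KK) ^ 2 = 1 := by exact_mod_cast hη
    linear_combination (-(CD (m + 2) (eInv a (m + 2)) (eInv a (m + 1)) (ε (m + 1)) u⁻¹ *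
      Fcal a ε (m + 1) (yy * u⁻¹))) * hη'

namespace IsNaiveEGK

variable {n : ℕ} {a : ℕ → ℕ} {ε : ℕ → ℤ}

lemma etav_sq (H : IsNaiveEGK n a ε) (hn : 1 ≤ n) : etav ε n ^ 2 = 1 := by
  unfold etav
  split_ifs with h
  · norm_num
  · rcases H.mem n hn le_rfl with h0 | h1 | h1
    · exact absurd h0 (H.n3 n hn le_rfl (Nat.not_even_iff_odd.mp h))
    all_goals simp [h1]

lemma Fcal_inv (H : IsNaiveEGK n a ε) (u : KK) : Fcal a ε n u⁻¹ = etav ε n * Fcal a ε n u := by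
  match n, H with
  | 0, _ => simp [Fcal, etav]
  | 1, H => simp [Fcal_one_inv, etav, H.n4 le_rfl]
  | m + 2, H => exact Fcal_add_two_inv a ε m (H.etav_sq (by omega)) u

end IsNaiveEGK

theorem statement_1_general (n : ℕ) (a : ℕ → ℕ) (ε : ℕ → ℤ)
    (H : IsNaiveEGK n a ε)
    (σ : KK ≃ₐ[ℚ] KK) (hx : σ xx = xx⁻¹) (hy : σ yy = yy) :
    σ (Fcal a ε n xx) = (etav ε n : KK) * Fcal a ε n xx := by
  rw [map_Fcal σ hy, hx, H.Fcal_inv]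

theorem statement_1 (n : ℕ) (hn : 1 ≤ n) (a : ℕ → ℕ) (ε : ℕ → ℤ)
    (H : IsNaiveEGK n a ε)
    (σ : KK ≃ₐ[ℚ] KK) (hx : σ xx = xx⁻¹) (hy : σ yy = yy) :
    σ (Fcal a ε n xx) = (etav ε n : KK) * Fcal a ε n xx :=
  statement_1_general n a ε H σ hx hy

end
end

section
/- Let H = (a_1,…,a_n; ε_1,…,ε_n) be a naive EGK datum of length n ≥ 2 with a_{n−1} = a_n, and let H'' = (a_1,…,a_{n−2}; ε_1,…,ε_{n−2}) (a naive EGK datum of length n−2, with the convention 𝓕(H'';Y,X) = 1 when n = 2). Assume n is even and a_1+⋯+a_n is odd. Then 𝓕(H;Y,X) = Y^{𝔢_{n−2}} { X^{(−𝔢_n+𝔢_{n−2})/2−1}/(X^{−1}−X) · 𝓕(H'';Y,Y²X) + X^{(𝔢_n−𝔢_{n−2})/2+1}/(X−X^{−1}) · 𝓕(H'';Y,Y²X^{−1}) }. In particular, 𝓕(H;Y,X) does not depend on ε_{n−1}. -/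
noncomputable section

/-! When `a_{n-1} = a_n` and `a_1 + ⋯ + a_n` is odd, the partial sums up to `n - 2` and `n` are
odd, so `ε_{n-2} = ε_n = 0` and both of the last two recursion steps have `ξ = 0`. Unfolding them
gives four terms. Since `n - 2` is even, `𝓕(H''; Y, X)` is invariant under `X ↦ X⁻¹`, so the two
terms carrying `ε_{n-1}` are multiples of `𝓕(H''; Y, X)`; their coefficients are opposite because
`𝔢_{n-1} - 𝔢_{n-2} = (𝔢_n - 𝔢_{n-1}) + 2 = a_n + 1`. The two remaining terms are the formula. -/

open Finset

lemma xx_ne_zero : xx ≠ 0 :=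
  (map_ne_zero_iff _ (IsFractionRing.injective _ _)).mpr (MvPolynomial.X_ne_zero _)

lemma yy_ne_zero : yy ≠ 0 :=
  (map_ne_zero_iff _ (IsFractionRing.injective _ _)).mpr (MvPolynomial.X_ne_zero _)

lemma Cfun_zero (e et : ℤ) (u : KK) :
    Cfun e et 0 u = yy ^ et * u ^ (et - e - 2) / ((u ^ 2)⁻¹ - u ^ 2) := by
  simp only [Cfun, Int.cast_zero, zero_mul, sub_zero, mul_one, zpow_neg, zpow_ofNat]
  ring_nf

lemma Dfun_zero (e et : ℤ) (u : KK) : Dfun e et 0 u = yy ^ et * u ^ (et - e) := by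
  simp only [Dfun, Int.cast_zero, zero_mul, sub_zero, div_one]
  ring_nf

lemma sum_Icc_one_add_two (a : ℕ → ℕ) (k : ℕ) :
    ∑ j ∈ Icc 1 (k + 2), a j = ∑ j ∈ Icc 1 k, a j + a (k + 1) + a (k + 2) := by
  rw [sum_Icc_succ_top (by omega), sum_Icc_succ_top (by omega)]

lemma eInv_of_odd (a : ℕ → ℕ) {i : ℕ} (hi : Odd i) : eInv a i = ∑ j ∈ Icc 1 i, a j := by
  rw [eInv, if_pos hi]

lemma eInv_of_even_of_odd_sum (a : ℕ → ℕ) {i : ℕ} (hi : Even i)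
    (hS : Odd (∑ j ∈ Icc 1 i, a j)) : eInv a i = ∑ j ∈ Icc 1 i, a j - 1 := by
  rw [eInv, if_neg (Nat.not_odd_iff_even.mpr hi)]
  obtain ⟨k, hk⟩ := hS
  rw [hk]
  omega

lemma IsNaiveEGK.eq_zero_of_odd_sum {n : ℕ} {a : ℕ → ℕ} {ε : ℕ → ℤ} (H : IsNaiveEGK n a ε)
    {i : ℕ} (hi : 1 ≤ i) (hin : i ≤ n) (he : Even i) (hS : Odd (∑ j ∈ Icc 1 i, a j)) :
    ε i = 0 :=
  not_not.mp fun h => Nat.not_even_iff_odd.mpr hS ((H.n2 i hi hin he).mp h)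

section Recursion

variable (a : ℕ → ℕ) (ε : ℕ → ℤ)

lemma Fcal_add_two (m : ℕ) (u : KK) :
    Fcal a ε (m + 2) u =
      CD (m + 2) (eInv a (m + 2)) (eInv a (m + 1))
          (if Even (m + 2) then ε (m + 2) else ε (m + 1)) u
        * Fcal a ε (m + 1) (yy * u)
      + (if Even (m + 2) then 1 else (ε (m + 2) : KK))
        * CD (m + 2) (eInv a (m + 2)) (eInv a (m + 1))
            (if Even (m + 2) then ε (m + 2) else ε (m + 1)) u⁻¹
        * Fcal a ε (m + 1) (yy * u⁻¹) := by
  rw [Fcal]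

lemma Fcal_add_two_of_even {m : ℕ} (hm : Even m) (u : KK) :
    Fcal a ε (m + 2) u =
      Cfun (eInv a (m + 2)) (eInv a (m + 1)) (ε (m + 2)) u * Fcal a ε (m + 1) (yy * u)
      + Cfun (eInv a (m + 2)) (eInv a (m + 1)) (ε (m + 2)) u⁻¹ * Fcal a ε (m + 1) (yy * u⁻¹) := by
  simp only [Fcal_add_two, CD, if_pos (hm.add even_two), one_mul]

lemma Fcal_add_two_of_odd {m : ℕ} (hm : Odd m) (u : KK) :
    Fcal a ε (m + 2) u =
      Dfun (eInv a (m + 2)) (eInv a (m + 1)) (ε (m + 1)) u * Fcal a ε (m + 1) (yy * u)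
      + ε (m + 2) * Dfun (eInv a (m + 2)) (eInv a (m + 1)) (ε (m + 1)) u⁻¹
        * Fcal a ε (m + 1) (yy * u⁻¹) := by
  simp only [Fcal_add_two, CD, if_neg (Nat.not_even_iff_odd.mpr (hm.add_even even_two))]

lemma Fcal_add_two_inv_of_even {m : ℕ} (hm : Even m) (u : KK) :
    Fcal a ε (m + 2) u⁻¹ = Fcal a ε (m + 2) u := by
  rw [Fcal_add_two_of_even a ε hm, Fcal_add_two_of_even a ε hm, inv_inv, add_comm]

lemma Fcal_congr {ε' : ℕ → ℤ} : ∀ {k : ℕ}, (∀ j ≤ k, ε' j = ε j) → Fcal a ε' k = Fcal a ε k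
  | 0, _ => rfl
  | 1, _ => rfl
  | m + 2, h => by
    funext u
    rw [Fcal_add_two, Fcal_add_two, h (m + 2) le_rfl, h (m + 1) (by omega),
      Fcal_congr fun j hj => h j (by omega)]

/-- Valid for every nonzero `u`, also where `(u ^ 2)⁻¹ - u ^ 2` vanishes: the computation only
uses `x / (-d) = -(x / d)`. -/
lemma Fcal_add_four_of_even {m : ℕ} (hm : Even m)
    (hε₂ : ε (m + 2) = 0) (hε₄ : ε (m + 4) = 0) {A : ℕ}
    (he₃ : eInv a (m + 3) = eInv a (m + 2) + A + 1)
    (he₄ : eInv a (m + 4) = eInv a (m + 2) + 2 * A) {u : KK} (hu : u ≠ 0) :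
    Fcal a ε (m + 4) u = (yy ^ 2) ^ (eInv a (m + 2)) *
        (u ^ (-(eInv a (m + 4)) + eInv a (m + 2) - 2) / ((u ^ 2)⁻¹ - u ^ 2) *
            Fcal a ε (m + 2) (yy ^ 2 * u) +
          u ^ (eInv a (m + 4) - eInv a (m + 2) + 2) / (u ^ 2 - (u ^ 2)⁻¹) *
            Fcal a ε (m + 2) (yy ^ 2 * u⁻¹)) := by
  have hy := yy_ne_zero
  rw [Fcal_add_two_of_even a ε (hm.add even_two), show m + 2 + 1 = m + 1 + 2 from rfl,
    Fcal_add_two_of_odd a ε hm.add_one, Fcal_add_two_of_odd a ε hm.add_one]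
  simp only [show m + 1 + 1 = m + 2 from rfl, show m + 1 + 2 = m + 3 from rfl,
    show m + 2 + 2 = m + 4 from rfl, hε₂, hε₄, Cfun_zero, Dfun_zero, he₃, he₄]
  set e := eInv a (m + 2)
  have hyu : yy * (yy * u) = yy ^ 2 * u := by ring
  have hyu' : yy * (yy * u⁻¹) = yy ^ 2 * u⁻¹ := by ring
  have hyui : yy * (yy * u)⁻¹ = u⁻¹ := by field_simp
  have hyui' : yy * (yy * u⁻¹)⁻¹ = u := by field_simp
  rw [hyu, hyu', hyui, hyui', Fcal_add_two_inv_of_even a ε hm]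
  have hC : e + A + 1 - (e + 2 * A) - 2 = -((A + 1 : ℕ) : ℤ) := by push_cast; ring
  have hD : e - (e + A + 1) = -((A + 1 : ℕ) : ℤ) := by push_cast; ring
  have hl : -(e + 2 * A) + e - 2 = -((2 * (A + 1) : ℕ) : ℤ) := by push_cast; ring
  have hr : e + 2 * A - e + 2 = ((2 * (A + 1) : ℕ) : ℤ) := by push_cast; ring
  have hyy : (yy ^ 2) ^ e = yy ^ e * yy ^ e := by rw [← mul_zpow, sq]
  rw [hC, hD, hl, hr, hyy, add_assoc e, zpow_add₀ hy,
    show (A : ℤ) + 1 = ((A + 1 : ℕ) : ℤ) by push_cast; ring]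
  simp only [zpow_neg, zpow_natCast, mul_inv, inv_pow, inv_inv]
  rw [show u ^ 2 - (u ^ 2)⁻¹ = -((u ^ 2)⁻¹ - u ^ 2) by ring, div_neg, div_neg]
  simp only [div_eq_mul_inv]
  generalize ((u ^ 2)⁻¹ - u ^ 2)⁻¹ = t
  simp only [mul_pow, mul_inv, inv_pow, inv_inv]
  field_simp
  ring

end Recursion

lemma exists_eq_add_four_of_odd_sum {n : ℕ} {a : ℕ → ℕ} (heven : Even n)
    (hlast : a (n - 1) = a n) (hodd : Odd (∑ j ∈ Icc 1 n, a j)) :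
    ∃ m, n = m + 4 ∧ Even m ∧ Odd (∑ j ∈ Icc 1 (m + 2), a j) := by
  rcases n with _ | _ | k
  · simp at hodd
  · exact absurd heven (by decide)
  have hS : Odd (∑ j ∈ Icc 1 k, a j) := by
    rw [sum_Icc_one_add_two, ← show a (k + 1) = a (k + 2) from hlast, Nat.odd_iff] at hodd
    exact Nat.odd_iff.mpr (by omega)
  rcases k with _ | _ | m
  · simp at hS
  · exact absurd heven (by decide)
  exact ⟨m, rfl, by simpa [Nat.even_add] using heven, hS⟩

theorem statement_4_general (n : ℕ) (heven : Even n) (a : ℕ → ℕ) (ε : ℕ → ℤ)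
    (H : IsNaiveEGK n a ε) (hlast : a (n - 1) = a n)
    (hodd : Odd (∑ j ∈ Finset.Icc 1 n, a j)) :
    Fcal a ε n xx =
      (yy ^ 2) ^ (eInv a (n - 2)) *
        (xx ^ (-(eInv a n) + eInv a (n - 2) - 2) / ((xx ^ 2)⁻¹ - xx ^ 2) *
            Fcal a ε (n - 2) (yy ^ 2 * xx) +
          xx ^ (eInv a n - eInv a (n - 2) + 2) / (xx ^ 2 - (xx ^ 2)⁻¹) *
            Fcal a ε (n - 2) (yy ^ 2 * xx⁻¹)) ∧
    ∀ ε' : ℕ → ℤ, IsNaiveEGK n a ε' → (∀ j, j ≠ n - 1 → ε' j = ε j) →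
      Fcal a ε' n xx = Fcal a ε n xx := by
  obtain ⟨m, rfl, hm, hS⟩ := exists_eq_add_four_of_odd_sum heven hlast hodd
  have hlast' : a (m + 3) = a (m + 4) := hlast
  have hodd' : Odd (∑ j ∈ Icc 1 (m + 2), a j + 2 * a (m + 4)) := by
    rwa [sum_Icc_one_add_two, hlast', add_assoc, ← two_mul] at hodd
  have he₂ := eInv_of_even_of_odd_sum a (hm.add even_two) hS
  have he₃ : eInv a (m + 3) = eInv a (m + 2) + a (m + 4) + 1 := by
    rw [eInv_of_odd a (hm.add_odd (by decide)), sum_Icc_succ_top (by omega), he₂, hlast']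
    push_cast; ring
  have he₄ : eInv a (m + 4) = eInv a (m + 2) + 2 * a (m + 4) := by
    rw [eInv_of_even_of_odd_sum a (hm.add (by decide)) hodd, sum_Icc_one_add_two, he₂, hlast']
    push_cast; ring
  have key := fun ε' (H' : IsNaiveEGK (m + 4) a ε') =>
    Fcal_add_four_of_even a ε' hm (H'.eq_zero_of_odd_sum (by omega) (by omega)
      (hm.add even_two) hS) (H'.eq_zero_of_odd_sum (by omega) le_rfl (hm.add (by decide)) hodd)
      he₃ he₄ xx_ne_zero
  refine ⟨key ε H, fun ε' H' hε' => ?_⟩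
  rw [key ε' H', key ε H, Fcal_congr a ε fun j hj => hε' j (by omega)]

theorem statement_4 (n : ℕ) (hn : 2 ≤ n) (heven : Even n) (a : ℕ → ℕ) (ε : ℕ → ℤ)
    (H : IsNaiveEGK n a ε) (hlast : a (n - 1) = a n)
    (hodd : Odd (∑ j ∈ Finset.Icc 1 n, a j)) :
    Fcal a ε n xx =
      (yy ^ 2) ^ (eInv a (n - 2)) *
        (xx ^ (-(eInv a n) + eInv a (n - 2) - 2) / ((xx ^ 2)⁻¹ - xx ^ 2) *
            Fcal a ε (n - 2) (yy ^ 2 * xx) +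
          xx ^ (eInv a n - eInv a (n - 2) + 2) / (xx ^ 2 - (xx ^ 2)⁻¹) *
            Fcal a ε (n - 2) (yy ^ 2 * xx⁻¹)) ∧
    ∀ ε' : ℕ → ℤ, IsNaiveEGK n a ε' → (∀ j, j ≠ n - 1 → ε' j = ε j) →
      Fcal a ε' n xx = Fcal a ε n xx :=
  statement_4_general n heven a ε H hlast hodd
end
end

section
/- Let n ≥ 3 and let G be an EGK datum of length n, with associated non-decreasing sequence (a_1,…,a_n). Assume that either (Case 1) n is odd, a_{n−1} = a_n, and a_1+⋯+a_{n−1} is even, or (Case 2) n is even, a_{n−1} = a_n, and a_1+⋯+a_n is odd. Then for any two naive EGK data H_1, H_2 of length n with Υ_n(H_1) = Υ_n(H_2) = G, writing H_i'' for the naive EGK datum of length n−2 obtained from H_i by deleting its last two entries of each tuple, one has Υ_{n−2}(H_1'') = Υ_{n−2}(H_2''). -/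
noncomputable section

/-- `n_s* = n_1 + ⋯ + n_s`. -/
def nstar (nn : ℕ → ℕ) (s : ℕ) : ℕ := ∑ i ∈ Finset.Icc 1 s, nn i

/-- An EGK datum `(n_1,…,n_r; m_1,…,m_r; ζ_1,…,ζ_r)` of length `n` (indexed from 1). -/
structure IsEGK (n r : ℕ) (nn mm : ℕ → ℕ) (ζ : ℕ → ℤ) : Prop where
  r_pos : 1 ≤ r
  nn_pos : ∀ s, 1 ≤ s → s ≤ r → 1 ≤ nn s
  total : nstar nn r = n
  m_mono : ∀ s t, 1 ≤ s → s < t → t ≤ r → mm s < mm t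
  zeta_mem : ∀ s, 1 ≤ s → s ≤ r → ζ s = 0 ∨ ζ s = 1 ∨ ζ s = -1
  e2 : ∀ s, 1 ≤ s → s ≤ r → Even (nstar nn s) →
    (ζ s ≠ 0 ↔ Even (∑ i ∈ Finset.Icc 1 s, mm i * nn i))
  e3_ne : ∀ s, 1 ≤ s → s ≤ r → Odd (nstar nn s) → ζ s ≠ 0
  e3a : ∀ s, 1 ≤ s → s ≤ r → Odd (nstar nn s) →
    (∀ i, 1 ≤ i → i < s → Even (nstar nn i)) →
    ζ s = ∏ i ∈ Finset.Icc 1 (s - 1), ζ i ^ (mm (i + 1) + mm i)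
  e3b : ∀ s t, 1 ≤ t → t < s → s ≤ r → Odd (nstar nn s) → Odd (nstar nn t) →
    (∀ i, t < i → i < s → Even (nstar nn i)) →
    ζ s = ζ t * ∏ i ∈ Finset.Icc (t + 1) (s - 1), ζ i ^ (mm (i + 1) + mm i)

/-- `Υ_n(a_1,…,a_n;ε_1,…,ε_n) = (n_1,…,n_r;m_1,…,m_r;ζ_1,…,ζ_r)`:
the sequence `a` consists of `m_1` repeated `n_1` times, …, `m_r` repeated `n_r` times,
with `m_1 < ⋯ < m_r`, and `ζ_s = ε_{n_s*}`. -/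
def UpsRel (n : ℕ) (a : ℕ → ℕ) (ε : ℕ → ℤ) (r : ℕ) (nn mm : ℕ → ℕ) (ζ : ℕ → ℤ) : Prop :=
  (∀ s, 1 ≤ s → s ≤ r → 1 ≤ nn s) ∧
  nstar nn r = n ∧
  (∀ s t, 1 ≤ s → s < t → t ≤ r → mm s < mm t) ∧
  (∀ s j, 1 ≤ s → s ≤ r → nstar nn (s - 1) < j → j ≤ nstar nn s → a j = mm s) ∧
  (∀ s, 1 ≤ s → s ≤ r → ζ s = ε (nstar nn s))

/-!
`Υ_n(H)` records the sequence `a` together with the signs `ε` at the ends of the blocks of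
equal entries of `a`. The blocks of `a_1, …, a_{n-2}` end at block ends of `a_1, …, a_n` and at
`n - 2`, so two naive data with the same image agree after truncation as soon as their signs
agree at `n - 2`. In Case 1, rule N5 at `i = n` reads `ε_n = ε_{n-1}^{2a_n} ε_{n-2} = ε_{n-2}`
because `ε_{n-1} = ±1`, and `n` is a block end. In Case 2, `a_1 + ⋯ + a_{n-2}` is odd, so
`ε_{n-2} = 0` by rule N2.
-/

/-- `p` is the last index of a block of equal entries of `a_1, …, a_m`, i.e. one of the indices
`n_s*` of `Υ_m`. -/
def IsBlockEnd (m : ℕ) (a : ℕ → ℕ) (p : ℕ) : Prop :=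
  1 ≤ p ∧ p ≤ m ∧ (p = m ∨ a p ≠ a (p + 1))

theorem isBlockEnd_self {m : ℕ} (a : ℕ → ℕ) (hm : 1 ≤ m) : IsBlockEnd m a m :=
  ⟨hm, le_rfl, Or.inl rfl⟩

theorem IsBlockEnd.eq_or_isBlockEnd_of_le {m n : ℕ} {a : ℕ → ℕ} {p : ℕ}
    (hp : IsBlockEnd m a p) (hmn : m ≤ n) : p = m ∨ IsBlockEnd n a p := by
  obtain ⟨hp1, hpm, rfl | hne⟩ := hp
  · exact Or.inl rfl
  · exact Or.inr ⟨hp1, hpm.trans hmn, Or.inr hne⟩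

theorem isBlockEnd_congr {m : ℕ} {a₁ a₂ : ℕ → ℕ} {p : ℕ}
    (ha : ∀ j, 1 ≤ j → j ≤ m → a₁ j = a₂ j) : IsBlockEnd m a₁ p ↔ IsBlockEnd m a₂ p := by
  refine and_congr_right fun hp1 => and_congr_right fun hpm => ?_
  rcases hpm.lt_or_eq with hlt | rfl
  · rw [ha p hp1 hpm, ha (p + 1) (by omega) hlt]
  · simp

theorem nstar_zero (nn : ℕ → ℕ) : nstar nn 0 = 0 := by
  simp [nstar]

theorem nstar_succ (nn : ℕ → ℕ) (s : ℕ) : nstar nn (s + 1) = nstar nn s + nn (s + 1) :=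
  Finset.sum_Icc_succ_top (Nat.le_add_left 1 s) nn

theorem nstar_pred_add {nn : ℕ → ℕ} {s : ℕ} (hs : 1 ≤ s) :
    nstar nn (s - 1) + nn s = nstar nn s := by
  obtain ⟨t, rfl⟩ := Nat.exists_eq_add_of_le' hs
  exact (nstar_succ nn t).symm

theorem nstar_mono (nn : ℕ → ℕ) : Monotone (nstar nn) := fun _ _ h =>
  Finset.sum_le_sum_of_subset (Finset.Icc_subset_Icc_right h)

theorem exists_block_of_le_nstar (nn : ℕ → ℕ) {r j : ℕ} (hj : 1 ≤ j) (hjr : j ≤ nstar nn r) :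
    ∃ s, 1 ≤ s ∧ s ≤ r ∧ nstar nn (s - 1) < j ∧ j ≤ nstar nn s := by
  induction r with
  | zero => rw [nstar_zero] at hjr; omega
  | succ r ih =>
    by_cases hjr' : j ≤ nstar nn r
    · obtain ⟨s, hs1, hsr, hlt, hle⟩ := ih hjr'
      exact ⟨s, hs1, hsr.trans r.le_succ, hlt, hle⟩
    · exact ⟨r + 1, by omega, le_rfl, by simpa using hjr', hjr⟩

namespace UpsRel

variable {n r : ℕ} {nn mm : ℕ → ℕ} {ζ : ℕ → ℤ} {a a₁ a₂ : ℕ → ℕ} {ε ε₁ ε₂ : ℕ → ℤ}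

theorem apply_eq_apply (hU₁ : UpsRel n a₁ ε₁ r nn mm ζ) (hU₂ : UpsRel n a₂ ε₂ r nn mm ζ)
    {j : ℕ} (hj : 1 ≤ j) (hjn : j ≤ n) : a₁ j = a₂ j := by
  obtain ⟨s, hs1, hsr, hlt, hle⟩ := exists_block_of_le_nstar nn hj (hU₁.2.1 ▸ hjn)
  rw [hU₁.2.2.2.1 s j hs1 hsr hlt hle, hU₂.2.2.2.1 s j hs1 hsr hlt hle]

theorem isBlockEnd_nstar (hU : UpsRel n a ε r nn mm ζ) {s : ℕ} (hs : 1 ≤ s) (hsr : s ≤ r) :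
    IsBlockEnd n a (nstar nn s) := by
  obtain ⟨hpos, htotal, hmono, hblock, -⟩ := hU
  have hprev : nstar nn (s - 1) < nstar nn s := by
    have := nstar_pred_add (nn := nn) hs
    have := hpos s hs hsr
    omega
  refine ⟨by omega, htotal ▸ nstar_mono nn hsr, ?_⟩
  rcases hsr.lt_or_eq with hlt | rfl
  · have hnext_pos := hpos (s + 1) (by omega) hlt
    have hnext_le : nstar nn (s + 1) ≤ n := htotal ▸ nstar_mono nn hlt
    have hcur : a (nstar nn s) = mm s := hblock s _ hs hsr hprev le_rfl
    have hnext : a (nstar nn s + 1) = mm (s + 1) :=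
      hblock (s + 1) _ (by omega) hlt (by simp) (by rw [nstar_succ]; omega)
    exact Or.inr (by rw [hcur, hnext]; exact (hmono s (s + 1) hs s.lt_succ_self hlt).ne)
  · exact Or.inl htotal

theorem exists_nstar_eq_of_isBlockEnd (hU : UpsRel n a ε r nn mm ζ) {p : ℕ}
    (hp : IsBlockEnd n a p) : ∃ s, 1 ≤ s ∧ s ≤ r ∧ nstar nn s = p := by
  obtain ⟨hp1, hpn, hend⟩ := hp
  obtain ⟨s, hs1, hsr, hlt, hle⟩ := exists_block_of_le_nstar nn hp1 (hU.2.1 ▸ hpn)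
  refine ⟨s, hs1, hsr, hle.antisymm' (not_lt.mp fun hlt' => ?_)⟩
  rcases hend with rfl | hne
  · exact hlt'.not_ge (hU.2.1 ▸ nstar_mono nn hsr)
  · exact hne ((hU.2.2.2.1 s p hs1 hsr hlt hle).trans
      (hU.2.2.2.1 s (p + 1) hs1 hsr (by omega) hlt').symm)

theorem eps_eq_of_isBlockEnd (hU₁ : UpsRel n a₁ ε₁ r nn mm ζ)
    (hU₂ : UpsRel n a₂ ε₂ r nn mm ζ) {p : ℕ} (hp : IsBlockEnd n a₁ p) : ε₁ p = ε₂ p := by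
  obtain ⟨s, hs1, hsr, rfl⟩ := hU₁.exists_nstar_eq_of_isBlockEnd hp
  rw [← hU₁.2.2.2.2 s hs1 hsr, ← hU₂.2.2.2.2 s hs1 hsr]

theorem of_eqOn (hU : UpsRel n a₁ ε₁ r nn mm ζ) (ha : ∀ j, 1 ≤ j → j ≤ n → a₁ j = a₂ j)
    (hε : ∀ p, IsBlockEnd n a₁ p → ε₁ p = ε₂ p) : UpsRel n a₂ ε₂ r nn mm ζ := by
  refine ⟨hU.1, hU.2.1, hU.2.2.1, fun s j hs hsr hlt hle => ?_, fun s hs hsr => ?_⟩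
  · have hjn : j ≤ n := hU.2.1 ▸ hle.trans (nstar_mono nn hsr)
    rw [← ha j (by omega) hjn]
    exact hU.2.2.2.1 s j hs hsr hlt hle
  · rw [hU.2.2.2.2 s hs hsr, hε _ (hU.isBlockEnd_nstar hs hsr)]

end UpsRel

theorem upsRel_iff_of_eqOn {n r : ℕ} {nn mm : ℕ → ℕ} {ζ : ℕ → ℤ} {a₁ a₂ : ℕ → ℕ}
    {ε₁ ε₂ : ℕ → ℤ} (ha : ∀ j, 1 ≤ j → j ≤ n → a₁ j = a₂ j)
    (hε : ∀ p, IsBlockEnd n a₁ p → ε₁ p = ε₂ p) :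
    UpsRel n a₁ ε₁ r nn mm ζ ↔ UpsRel n a₂ ε₂ r nn mm ζ :=
  ⟨fun hU => hU.of_eqOn ha hε, fun hU => hU.of_eqOn (fun j hj hjn => (ha j hj hjn).symm)
    fun p hp => (hε p ((isBlockEnd_congr ha).mpr hp)).symm⟩

namespace IsNaiveEGK

variable {n : ℕ} {a : ℕ → ℕ} {ε : ℕ → ℤ}

theorem eps_sub_two_eq_of_odd (h : IsNaiveEGK n a ε) (hn : 3 ≤ n) (hodd : Odd n)
    (hlast : a (n - 1) = a n) (hsum : Even (∑ j ∈ Finset.Icc 1 (n - 1), a j)) :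
    ε (n - 2) = ε n := by
  have hne : ε (n - 1) ≠ 0 :=
    (h.n2 (n - 1) (by omega) (by omega) (Nat.Odd.sub_odd hodd odd_one)).mpr hsum
  have hpow : ε (n - 1) ^ (a n + a (n - 1)) = 1 := by
    have hexp : Even (a n + a (n - 1)) := by rw [hlast]; exact Even.add_self _
    rcases h.mem (n - 1) (by omega) (by omega) with h0 | h1 | h1
    · exact absurd h0 hne
    · rw [h1, one_pow]
    · rw [h1, hexp.neg_one_pow]
  rw [h.n5 n hn le_rfl hodd hsum, hpow, one_mul]

theorem eps_sub_two_eq_zero_of_even (h : IsNaiveEGK n a ε) (hn : 3 ≤ n) (heven : Even n)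
    (hlast : a (n - 1) = a n) (hsum : Odd (∑ j ∈ Finset.Icc 1 n, a j)) : ε (n - 2) = 0 := by
  obtain ⟨m, rfl⟩ : ∃ m, n = m + 2 := ⟨n - 2, by omega⟩
  have hsplit : ∑ j ∈ Finset.Icc 1 (m + 2), a j
      = ∑ j ∈ Finset.Icc 1 m, a j + (a (m + 1) + a (m + 2)) := by
    rw [Finset.sum_Icc_succ_top (by omega), Finset.sum_Icc_succ_top (by omega), add_assoc]
  have hodd : ¬ Even (∑ j ∈ Finset.Icc 1 m, a j) := by
    have hpair : Even (a (m + 1) + a (m + 2)) := by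
      rw [show m + 1 = m + 2 - 1 by omega, hlast]; exact Even.add_self _
    rw [hsplit] at hsum
    exact fun he => Nat.not_even_iff_odd.mpr hsum (he.add hpair)
  have hm : Even m := (Nat.even_add.mp heven).mpr even_two
  simpa using mt (h.n2 m (by omega) (by omega) hm).mp hodd

end IsNaiveEGK

theorem statement_6_general (n : ℕ) (hn : 3 ≤ n)
    (r : ℕ) (nn mm : ℕ → ℕ) (ζ : ℕ → ℤ)
    (a₁ a₂ : ℕ → ℕ) (ε₁ ε₂ : ℕ → ℤ)
    (h₁ : IsNaiveEGK n a₁ ε₁) (h₂ : IsNaiveEGK n a₂ ε₂)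
    (hU₁ : UpsRel n a₁ ε₁ r nn mm ζ) (hU₂ : UpsRel n a₂ ε₂ r nn mm ζ)
    (hcase : (Odd n ∧ a₁ (n - 1) = a₁ n ∧
        Even (∑ j ∈ Finset.Icc 1 (n - 1), a₁ j)) ∨
      (Even n ∧ a₁ (n - 1) = a₁ n ∧ Odd (∑ j ∈ Finset.Icc 1 n, a₁ j))) :
    ∀ (r' : ℕ) (nn' mm' : ℕ → ℕ) (ζ' : ℕ → ℤ),
      UpsRel (n - 2) a₁ ε₁ r' nn' mm' ζ' ↔ UpsRel (n - 2) a₂ ε₂ r' nn' mm' ζ' := by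
  have ha : ∀ j, 1 ≤ j → j ≤ n → a₁ j = a₂ j := fun j => hU₁.apply_eq_apply hU₂
  have hlast : a₂ (n - 1) = a₂ n ↔ a₁ (n - 1) = a₁ n := by
    rw [ha (n - 1) (by omega) (by omega), ha n (by omega) le_rfl]
  have hsum : ∀ k ≤ n, ∑ j ∈ Finset.Icc 1 k, a₁ j = ∑ j ∈ Finset.Icc 1 k, a₂ j :=
    fun k hk => Finset.sum_congr rfl fun j hj => by
      obtain ⟨hj1, hjk⟩ := Finset.mem_Icc.mp hj
      exact ha j hj1 (hjk.trans hk)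
  have hε_trunc : ε₁ (n - 2) = ε₂ (n - 2) := by
    rcases hcase with ⟨hodd, hlast₁, hsum₁⟩ | ⟨heven, hlast₁, hsum₁⟩
    · rw [h₁.eps_sub_two_eq_of_odd hn hodd hlast₁ hsum₁,
        h₂.eps_sub_two_eq_of_odd hn hodd (hlast.mpr hlast₁) (hsum (n - 1) (by omega) ▸ hsum₁)]
      exact hU₁.eps_eq_of_isBlockEnd hU₂ (isBlockEnd_self a₁ (by omega))
    · rw [h₁.eps_sub_two_eq_zero_of_even hn heven hlast₁ hsum₁,
        h₂.eps_sub_two_eq_zero_of_even hn heven (hlast.mpr hlast₁) (hsum n le_rfl ▸ hsum₁)]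
  intro r' nn' mm' ζ'
  refine upsRel_iff_of_eqOn (fun j hj hjn => ha j hj (by omega)) fun p hp => ?_
  rcases hp.eq_or_isBlockEnd_of_le (Nat.sub_le n 2) with rfl | hp
  · exact hε_trunc
  · exact hU₁.eps_eq_of_isBlockEnd hU₂ hp

theorem statement_6 (n : ℕ) (hn : 3 ≤ n)
    (r : ℕ) (nn mm : ℕ → ℕ) (ζ : ℕ → ℤ) (hG : IsEGK n r nn mm ζ)
    (a₁ a₂ : ℕ → ℕ) (ε₁ ε₂ : ℕ → ℤ)
    (h₁ : IsNaiveEGK n a₁ ε₁) (h₂ : IsNaiveEGK n a₂ ε₂)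
    (hU₁ : UpsRel n a₁ ε₁ r nn mm ζ) (hU₂ : UpsRel n a₂ ε₂ r nn mm ζ)
    (hcase : (Odd n ∧ a₁ (n - 1) = a₁ n ∧
        Even (∑ j ∈ Finset.Icc 1 (n - 1), a₁ j)) ∨
      (Even n ∧ a₁ (n - 1) = a₁ n ∧ Odd (∑ j ∈ Finset.Icc 1 n, a₁ j))) :
    ∀ (r' : ℕ) (nn' mm' : ℕ → ℕ) (ζ' : ℕ → ℤ),
      UpsRel (n - 2) a₁ ε₁ r' nn' mm' ζ' ↔ UpsRel (n - 2) a₂ ε₂ r' nn' mm' ζ' :=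
  statement_6_general n hn r nn mm ζ a₁ a₂ ε₁ ε₂ h₁ h₂ hU₁ hU₂ hcase

end
end

section
/- Let B ∈ 𝓗_n(𝔬) be non-degenerate, and let 𝔩_B be the least integer such that ϖ^{𝔩_B} B^{−1} ∈ 𝓗_n(𝔬). Then there exists a positive integer λ, depending only on n and 𝔩_B, with the following property: every A ∈ 𝓗_n(𝔬) with all entries of A − B lying in ϖ^{λ}𝔬 is GL_n(𝔬)-equivalent to B. Moreover, if q is odd, then one may take λ = 𝔩_B + 1. -/
/-!
Put `S = 2B` and `T = 2ϖ^l B⁻¹`: integral symmetric matrices with `ST = TS = c := 4ϖ^l`.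
If `A - B ∈ 8ϖ^(l+1) M_n(𝔬)`, then `2A = S + 4cϖ E` with `E` integral symmetric, and the
equation `VᵀSV = S + 4cϖ E` is solved by Newton's method: when the error at stage `k` is
`4cϖ^(k+1) E_k`, replacing `V` by `V (1 + 2ϖ^(k+1) T_k E_k)`, where `T_k = V⁻¹TV⁻ᵀ` is `c`
times the inverse of `VᵀSV`, pushes the error into `4cϖ^(k+2) M_n(𝔬)` and moves `V` only
modulo `ϖ^(k+1)`; by completeness the `V`'s converge in `GL_n(𝔬)`. Writing `2 = uϖ^e`,
the ideal `ϖ^λ 𝔬` lies in `8ϖ^(l+1) 𝔬` once `λ ≥ l + 3e + 1`, and `e = 0` when `q` is odd.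
-/

noncomputable section

open Matrix

/-- `c ∈ ϖ^k 𝔬` inside `F`, i.e. `ord(c) ≥ k`. -/
def MemPi {𝔬 F : Type} [CommRing 𝔬] [Field F] [Algebra 𝔬 F]
    (ϖ : 𝔬) (k : ℕ) (c : F) : Prop :=
  ∃ d : 𝔬, c = algebraMap 𝔬 F (ϖ ^ k * d)

/-- `c ∈ ϖ^k 𝔬` inside `F`, for an integer exponent `k`. -/
def MemPiZ {𝔬 F : Type} [CommRing 𝔬] [Field F] [Algebra 𝔬 F]
    (ϖ : 𝔬) (k : ℤ) (c : F) : Prop :=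
  ∃ d : 𝔬, c = (algebraMap 𝔬 F ϖ) ^ k * algebraMap 𝔬 F d

/-- `B ∈ 𝓗_ι(𝔬)`: a half-integral symmetric matrix over `𝔬`. -/
def IsHalfIntegral (𝔬 : Type) {F ι : Type} [CommRing 𝔬] [Field F] [Algebra 𝔬 F]
    (B : Matrix ι ι F) : Prop :=
  B.IsSymm ∧ (∀ i, ∃ d : 𝔬, B i i = algebraMap 𝔬 F d) ∧
    (∀ i j, i ≠ j → ∃ d : 𝔬, 2 * B i j = algebraMap 𝔬 F d)

/-- `GL_ι(𝔬)`-equivalence of two matrices over `F`. -/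
def GLEquiv (𝔬 : Type) {F ι : Type} [CommRing 𝔬] [Field F] [Algebra 𝔬 F]
    [Fintype ι] [DecidableEq ι] (B A : Matrix ι ι F) : Prop :=
  ∃ U : Matrix ι ι 𝔬, IsUnit U.det ∧
    A = (U.map (algebraMap 𝔬 F))ᵀ * B * U.map (algebraMap 𝔬 F)

section AdicMatrix

variable {R ι : Type*} [CommRing R] [Fintype ι] [DecidableEq ι] {I J : Ideal R}

theorem Ideal.smodEq_smul_top_iff {x y : R} :
    x ≡ y [SMOD (J • ⊤ : Submodule R R)] ↔ Ideal.Quotient.mk J x = Ideal.Quotient.mk J y := by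
  rw [smul_eq_mul, Ideal.mul_top, SModEq.sub_mem, Ideal.Quotient.eq]

theorem Matrix.isUnit_det_of_mapMatrix_eq_one (hI : I ≤ (⊥ : Ideal R).jacobson)
    {V : Matrix ι ι R} (hV : (Ideal.Quotient.mk I).mapMatrix V = 1) : IsUnit V.det := by
  have hdet : V.det - 1 ∈ I := by
    rw [← Ideal.Quotient.eq, RingHom.map_det, hV, det_one, map_one]
  simpa using Ideal.mem_jacobson_bot.mp (hI hdet) 1

theorem Matrix.mapMatrix_add_smul_of_mem {a : R} (ha : a ∈ J) (X Y : Matrix ι ι R) :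
    (Ideal.Quotient.mk J).mapMatrix (X + a • Y) = (Ideal.Quotient.mk J).mapMatrix X := by
  rw [map_add, add_eq_left]
  ext i j
  exact Ideal.Quotient.eq_zero_iff_mem.mpr (J.mul_mem_right (Y i j) ha)

theorem Matrix.eq_of_forall_mapMatrix_eq [IsHausdorff I R] {X Y : Matrix ι ι R}
    (h : ∀ k, (Ideal.Quotient.mk (I ^ k)).mapMatrix X = (Ideal.Quotient.mk (I ^ k)).mapMatrix Y) :
    X = Y := by
  ext i j
  exact (IsHausdorff.eq_iff_smodEq (I := I)).mpr fun k =>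
    Ideal.smodEq_smul_top_iff.mpr (congrFun₂ (h k) i j)

theorem Matrix.exists_forall_mapMatrix_pow_eq [IsPrecomplete I R] (V : ℕ → Matrix ι ι R)
    (hV : ∀ k, (Ideal.Quotient.mk (I ^ k)).mapMatrix (V k) =
      (Ideal.Quotient.mk (I ^ k)).mapMatrix (V (k + 1))) :
    ∃ W, ∀ k, (Ideal.Quotient.mk (I ^ k)).mapMatrix (V k) =
      (Ideal.Quotient.mk (I ^ k)).mapMatrix W := by
  have hcauchy (i j : ι) : AdicCompletion.IsAdicCauchy I R (fun k => V k i j) :=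
    (AdicCompletion.isAdicCauchy_iff I R _).mpr fun k =>
      Ideal.smodEq_smul_top_iff.mpr (congrFun₂ (hV k) i j)
  choose W hW using fun i j => IsPrecomplete.prec ‹_› (hcauchy i j)
  exact ⟨Matrix.of W, fun k => Matrix.ext fun i j => Ideal.smodEq_smul_top_iff.mp (hW i j k)⟩

theorem Matrix.mapMatrix_transpose_mul_mul_congr (S : Matrix ι ι R) {X Y : Matrix ι ι R}
    (h : (Ideal.Quotient.mk J).mapMatrix X = (Ideal.Quotient.mk J).mapMatrix Y) :
    (Ideal.Quotient.mk J).mapMatrix (Xᵀ * S * X) =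
      (Ideal.Quotient.mk J).mapMatrix (Yᵀ * S * Y) := by
  simp only [map_mul, RingHom.mapMatrix_apply, transpose_map] at h ⊢
  rw [h]

end AdicMatrix

section QuadraticHensel

variable {R ι : Type*} [CommRing R] [Fintype ι] [DecidableEq ι] {S T : Matrix ι ι R} {c : R}

theorem Matrix.one_add_smul_mul_transpose_mul_mul (hST : S * T = c • 1) (hTS : T * S = c • 1)
    (hT : Tᵀ = T) (a : R) {E : Matrix ι ι R} (hE : Eᵀ = E) :
    (1 + a • (T * E))ᵀ * S * (1 + a • (T * E)) =
      S + (2 * a * c) • E + (a ^ 2 * c) • (E * T * E) := by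
  have hSTE : S * (T * E) = c • E := by rw [← Matrix.mul_assoc, hST, Matrix.smul_mul, one_mul]
  have hETS : E * T * S = c • E := by rw [Matrix.mul_assoc, hTS, Matrix.mul_smul, mul_one]
  rw [transpose_add, transpose_one, transpose_smul, transpose_mul, hT, hE]
  simp only [add_mul, mul_add, one_mul, mul_one, Matrix.smul_mul, Matrix.mul_smul, hSTE, hETS]
  simp only [Matrix.mul_assoc]
  module

theorem Matrix.mul_conj_inv_eq_smul_one (hST : S * T = c • 1) {V : Matrix ι ι R}
    (hV : IsUnit V.det) : (Vᵀ * S * V) * (V⁻¹ * T * V⁻¹ᵀ) = c • 1 := by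
  have hVt : IsUnit Vᵀ.det := by rwa [det_transpose]
  calc (Vᵀ * S * V) * (V⁻¹ * T * V⁻¹ᵀ) = Vᵀ * (S * (V * V⁻¹) * T) * V⁻¹ᵀ := by
        simp only [Matrix.mul_assoc]
    _ = c • 1 := by
        rw [mul_nonsing_inv _ hV, mul_one, hST, Matrix.mul_smul, Matrix.smul_mul, mul_one,
          transpose_nonsing_inv, mul_nonsing_inv _ hVt]

theorem Matrix.conj_inv_mul_eq_smul_one (hTS : T * S = c • 1) {V : Matrix ι ι R}
    (hV : IsUnit V.det) : (V⁻¹ * T * V⁻¹ᵀ) * (Vᵀ * S * V) = c • 1 := by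
  have hVt : IsUnit Vᵀ.det := by rwa [det_transpose]
  calc (V⁻¹ * T * V⁻¹ᵀ) * (Vᵀ * S * V) = V⁻¹ * (T * (V⁻¹ᵀ * Vᵀ) * S) * V := by
        simp only [Matrix.mul_assoc]
    _ = c • 1 := by
        rw [transpose_nonsing_inv, nonsing_inv_mul _ hVt, mul_one, hTS, Matrix.mul_smul,
          Matrix.smul_mul, mul_one, nonsing_inv_mul _ hV]

variable {I : Ideal R} {π : R}

theorem Matrix.exists_newton_step (hI : I ≤ (⊥ : Ideal R).jacobson) (hπ : π ∈ I)
    (hST : S * T = c • 1) (hTS : T * S = c • 1) (hT : Tᵀ = T) (k : ℕ) {V E : Matrix ι ι R}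
    (hV : (Ideal.Quotient.mk I).mapMatrix V = 1) (hE : Eᵀ = E) :
    ∃ V' E' : Matrix ι ι R, (Ideal.Quotient.mk I).mapMatrix V' = 1 ∧ E'ᵀ = E' ∧
      V'ᵀ * S * V' + (4 * c * π ^ (k + 2)) • E' = Vᵀ * S * V + (4 * c * π ^ (k + 1)) • E ∧
      (Ideal.Quotient.mk (I ^ k)).mapMatrix V' = (Ideal.Quotient.mk (I ^ k)).mapMatrix V := by
  have hVu := isUnit_det_of_mapMatrix_eq_one hI hV
  set T' := V⁻¹ * T * V⁻¹ᵀ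
  have hT' : T'ᵀ = T' := by
    simp only [T', transpose_mul, transpose_transpose, hT, Matrix.mul_assoc]
  have hU {J : Ideal R} (hJ : 2 * π ^ (k + 1) ∈ J) :
      (Ideal.Quotient.mk J).mapMatrix (V * (1 + (2 * π ^ (k + 1)) • (T' * E))) =
        (Ideal.Quotient.mk J).mapMatrix V := by
    rw [map_mul, mapMatrix_add_smul_of_mem hJ, map_one, mul_one]
  refine ⟨V * (1 + (2 * π ^ (k + 1)) • (T' * E)), -(π ^ k) • (E * T' * E), ?_, ?_, ?_, ?_⟩
  · rw [hU (I.mul_mem_left _ (I.pow_mem_of_mem hπ _ k.succ_pos)), hV]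
  · simp only [transpose_smul, transpose_mul, hE, hT', Matrix.mul_assoc]
  · have hconj (U : Matrix ι ι R) : (V * U)ᵀ * S * (V * U) = Uᵀ * (Vᵀ * S * V) * U := by
      simp only [transpose_mul, Matrix.mul_assoc]
    rw [hconj, one_add_smul_mul_transpose_mul_mul (mul_conj_inv_eq_smul_one hST hVu)
        (conj_inv_mul_eq_smul_one hTS hVu) hT' _ hE]
    module
  · exact hU (Ideal.mul_mem_left _ _ (Ideal.pow_le_pow_right k.le_succ (Ideal.pow_mem_pow hπ _)))

theorem Matrix.exists_isUnit_det_transpose_mul_mul_eq [IsAdicComplete I R] (hπ : π ∈ I)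
    (hST : S * T = c • 1) (hTS : T * S = c • 1) (hT : Tᵀ = T) {E : Matrix ι ι R} (hE : Eᵀ = E) :
    ∃ V : Matrix ι ι R, IsUnit V.det ∧ Vᵀ * S * V = S + (4 * c * π) • E := by
  have hI := IsAdicComplete.le_jacobson_bot (R := R) I
  let P (k : ℕ) (x : Matrix ι ι R × Matrix ι ι R) : Prop :=
    (Ideal.Quotient.mk I).mapMatrix x.1 = 1 ∧ x.2ᵀ = x.2 ∧
      x.1ᵀ * S * x.1 + (4 * c * π ^ (k + 1)) • x.2 = S + (4 * c * π) • E
  have hstep (k : ℕ) (x) (hx : P k x) : ∃ y, P (k + 1) y ∧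
      (Ideal.Quotient.mk (I ^ k)).mapMatrix x.1 = (Ideal.Quotient.mk (I ^ k)).mapMatrix y.1 := by
    obtain ⟨V', E', hV', hE', herr, hcongr⟩ := exists_newton_step hI hπ hST hTS hT k hx.1 hx.2.1
    exact ⟨(V', E'), ⟨hV', hE', herr.trans hx.2.2⟩, hcongr.symm⟩
  choose! next hnext using hstep
  let seq (k : ℕ) : Matrix ι ι R × Matrix ι ι R := Nat.rec (1, E) next k
  have hseq (k : ℕ) : P k (seq k) :=
    Nat.rec ⟨map_one _, hE, by simp [seq]⟩ (fun k ih => (hnext k _ ih).1) k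
  obtain ⟨W, hW⟩ := exists_forall_mapMatrix_pow_eq (I := I) (fun k => (seq k).1)
    fun k => (hnext k _ (hseq k)).2
  refine ⟨W, isUnit_det_of_mapMatrix_eq_one hI ?_, eq_of_forall_mapMatrix_eq (I := I) fun k => ?_⟩
  · rw [← (hseq 1).1, ← pow_one I]
    exact (hW 1).symm
  · rw [mapMatrix_transpose_mul_mul_congr S (hW k).symm, ← (hseq k).2.2,
      mapMatrix_add_smul_of_mem]
    exact Ideal.mul_mem_left _ _ (Ideal.pow_le_pow_right k.le_succ (Ideal.pow_mem_pow hπ _))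

end QuadraticHensel

section Lift

variable {𝔬 F ι : Type} [CommRing 𝔬] [Field F] [Algebra 𝔬 F] [FaithfulSMul 𝔬 F]

theorem Matrix.IsSymm.exists_transpose_eq_smul_map {X : Matrix ι ι F} (hX : X.IsSymm) {K : F}
    (hK : K ≠ 0) (h : ∀ i j, ∃ d : 𝔬, X i j = K * algebraMap 𝔬 F d) :
    ∃ Y : Matrix ι ι 𝔬, Yᵀ = Y ∧ X = K • Y.map (algebraMap 𝔬 F) := by
  choose Y hY using h
  refine ⟨Matrix.of Y, Matrix.ext fun i j => FaithfulSMul.algebraMap_injective 𝔬 F ?_, ?_⟩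
  · exact mul_left_cancel₀ hK (by simp [← hY, hX.apply])
  · ext i j
    simp [hY]

theorem IsHalfIntegral.exists_transpose_eq_map_eq_two_smul {X : Matrix ι ι F}
    (hX : IsHalfIntegral 𝔬 X) :
    ∃ Y : Matrix ι ι 𝔬, Yᵀ = Y ∧ Y.map (algebraMap 𝔬 F) = (2 : F) • X := by
  have h2X (i j : ι) : ∃ d : 𝔬, ((2 : F) • X) i j = 1 * algebraMap 𝔬 F d := by
    rcases eq_or_ne i j with rfl | hij
    · obtain ⟨d, hd⟩ := hX.2.1 i
      exact ⟨2 * d, by simp [hd, map_ofNat]⟩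
    · simpa using hX.2.2 i j hij
  obtain ⟨Y, hY, hXY⟩ := (hX.1.smul (2 : F)).exists_transpose_eq_smul_map one_ne_zero h2X
  exact ⟨Y, hY, by rw [hXY, one_smul]⟩

theorem Matrix.eq_smul_one_of_map_eq {X : Matrix ι ι 𝔬} [DecidableEq ι] {c : 𝔬}
    (h : X.map (algebraMap 𝔬 F) = algebraMap 𝔬 F c • 1) : X = c • 1 :=
  map_injective (FaithfulSMul.algebraMap_injective 𝔬 F) (by simp [h, Matrix.map_smul', map_one])

end Lift

theorem GLEquiv.of_forall_sub_eq_eight_mul {𝔬 F ι : Type} [CommRing 𝔬] [Field F] [Algebra 𝔬 F]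
    [FaithfulSMul 𝔬 F] [NeZero (2 : F)] [Fintype ι] [DecidableEq ι]
    (I : Ideal 𝔬) [IsAdicComplete I 𝔬] {ϖ : 𝔬} (hϖI : ϖ ∈ I) (hϖ : algebraMap 𝔬 F ϖ ≠ 0) (l : ℤ)
    {B A : Matrix ι ι F} (hB : IsHalfIntegral 𝔬 B) (hBdet : B.det ≠ 0)
    (hBinv : IsHalfIntegral 𝔬 ((algebraMap 𝔬 F ϖ ^ l) • B⁻¹)) (hA : IsHalfIntegral 𝔬 A)
    (hAB : ∀ i j, ∃ d : 𝔬, (A - B) i j = 8 * algebraMap 𝔬 F ϖ ^ (l + 1) * algebraMap 𝔬 F d) :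
    GLEquiv 𝔬 B A := by
  rcases isEmpty_or_nonempty ι with hι | ⟨⟨i⟩⟩
  · exact ⟨1, by simp, Subsingleton.elim _ _⟩
  set φ := algebraMap 𝔬 F
  obtain ⟨S, -, hSB⟩ := hB.exists_transpose_eq_map_eq_two_smul
  obtain ⟨T, hT, hTB⟩ := hBinv.exists_transpose_eq_map_eq_two_smul
  have hBB : B * B⁻¹ = 1 := mul_nonsing_inv B (isUnit_iff_ne_zero.mpr hBdet)
  have hBB' : B⁻¹ * B = 1 := nonsing_inv_mul B (isUnit_iff_ne_zero.mpr hBdet)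
  have hSTmap : (S * T).map φ = (4 * φ ϖ ^ l) • 1 := by
    rw [Matrix.map_mul, hSB, hTB, smul_mul_smul, Matrix.mul_smul, hBB]
    norm_num [smul_smul]
  set c := (S * T) i i
  have hc : φ c = 4 * φ ϖ ^ l := by simpa using congrFun₂ hSTmap i i
  have hST : S * T = c • 1 := eq_smul_one_of_map_eq (F := F) (by rw [hSTmap, hc])
  have hTS : T * S = c • 1 := eq_smul_one_of_map_eq (F := F) (by
    rw [Matrix.map_mul, hSB, hTB, hc, smul_mul_smul, Matrix.smul_mul, hBB']
    norm_num [smul_smul])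
  have h8 : (8 : F) ≠ 0 := by
    simpa [show (8 : F) = 2 ^ 3 by norm_num] using pow_ne_zero 3 (two_ne_zero (α := F))
  obtain ⟨E, hE, hABE⟩ := (hA.1.sub hB.1).exists_transpose_eq_smul_map
    (mul_ne_zero h8 (zpow_ne_zero _ hϖ)) hAB
  obtain ⟨V, hV, hVSV⟩ := exists_isUnit_det_transpose_mul_mul_eq hϖI hST hTS hT hE
  refine ⟨V, hV, smul_right_injective _ (two_ne_zero (α := F)) ?_⟩
  have hmap := congrArg φ.mapMatrix hVSV
  simp only [map_mul, map_add, RingHom.mapMatrix_apply, Matrix.transpose_map] at hmap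
  rw [Matrix.map_smul' _ _ _ (map_mul φ), hSB] at hmap
  have hscalar : φ (4 * c * ϖ) = 2 * (8 * φ ϖ ^ (l + 1)) := by
    rw [map_mul, map_mul, hc, zpow_add_one₀ hϖ, map_ofNat]
    ring
  rw [Matrix.mul_smul, Matrix.smul_mul, hscalar, mul_smul, ← hABE, ← smul_add,
    add_sub_cancel] at hmap
  exact hmap.symm

theorem MemPiZ.exists_eq_eight_mul {𝔬 F : Type} [CommRing 𝔬] [Field F] [Algebra 𝔬 F] {ϖ : 𝔬}
    (hϖ : algebraMap 𝔬 F ϖ ≠ 0) {u : 𝔬ˣ} {e : ℕ} (h2 : (2 : 𝔬) = u * ϖ ^ e) {l μ : ℤ}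
    (hμ : l + 3 * e + 1 ≤ μ) {x : F} (hx : MemPiZ ϖ μ x) :
    ∃ d : 𝔬, x = 8 * algebraMap 𝔬 F ϖ ^ (l + 1) * algebraMap 𝔬 F d := by
  obtain ⟨d, rfl⟩ := hx
  obtain ⟨k, hk⟩ := Int.eq_ofNat_of_zero_le (sub_nonneg.mpr hμ)
  refine ⟨↑u⁻¹ ^ 3 * ϖ ^ k * d, ?_⟩
  have h8 : (8 : F) = algebraMap 𝔬 F u ^ 3 * algebraMap 𝔬 F ϖ ^ (3 * e) := by
    have := congrArg (algebraMap 𝔬 F · ^ 3) h2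
    simp only [map_ofNat, map_mul, map_pow] at this
    rw [pow_mul', ← mul_pow, ← this]
    norm_num
  have hu : algebraMap 𝔬 F u ≠ 0 := by
    simpa using (u.isUnit.map (algebraMap 𝔬 F)).ne_zero
  rw [show μ = l + 1 + ((3 * e : ℕ) : ℤ) + k by omega, zpow_add₀ hϖ, zpow_add₀ hϖ, zpow_natCast,
    zpow_natCast, h8, map_mul, map_mul, map_pow, map_pow, map_units_inv]
  field_simp

theorem two_ne_zero_of_odd_natCard {k : Type*} [Field k] (hk : Odd (Nat.card k)) : (2 : k) ≠ 0 := by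
  intro h2
  have : CharP k 2 := CharTwo.of_one_ne_zero_of_two_eq_zero one_ne_zero h2
  have : Finite k := Nat.finite_of_card_ne_zero hk.pos.ne'
  have : Fintype k := Fintype.ofFinite k
  have := FiniteField.even_card_of_char_two (ringChar.eq k 2)
  rw [Nat.card_eq_fintype_card, Nat.odd_iff] at hk
  omega

theorem statement_11_general
    (𝔬 : Type) [CommRing 𝔬] [IsDomain 𝔬] [IsDiscreteValuationRing 𝔬]
    [IsAdicComplete (IsLocalRing.maximalIdeal 𝔬) 𝔬]
    (F : Type) [Field F] [Algebra 𝔬 F] [IsFractionRing 𝔬 F] [CharZero F]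
    (ϖ : 𝔬) (hϖ : Irreducible ϖ)
    (n : ℕ) (l : ℤ) :
    (∃ lam : ℕ, 0 < lam ∧
      ∀ B : Matrix (Fin n) (Fin n) F, IsHalfIntegral 𝔬 B → B.det ≠ 0 →
        IsHalfIntegral 𝔬 ((algebraMap 𝔬 F ϖ ^ l) • B⁻¹) →
        (∀ l' : ℤ, l' < l → ¬ IsHalfIntegral 𝔬 ((algebraMap 𝔬 F ϖ ^ l') • B⁻¹)) →
        ∀ A : Matrix (Fin n) (Fin n) F, IsHalfIntegral 𝔬 A →
          (∀ i j, MemPiZ ϖ (lam : ℤ) ((A - B) i j)) → GLEquiv 𝔬 B A) ∧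
    (Odd (Nat.card (IsLocalRing.ResidueField 𝔬)) →
      ∀ B : Matrix (Fin n) (Fin n) F, IsHalfIntegral 𝔬 B → B.det ≠ 0 →
        IsHalfIntegral 𝔬 ((algebraMap 𝔬 F ϖ ^ l) • B⁻¹) →
        (∀ l' : ℤ, l' < l → ¬ IsHalfIntegral 𝔬 ((algebraMap 𝔬 F ϖ ^ l') • B⁻¹)) →
        ∀ A : Matrix (Fin n) (Fin n) F, IsHalfIntegral 𝔬 A →
          (∀ i j, MemPiZ ϖ (l + 1) ((A - B) i j)) → GLEquiv 𝔬 B A) := by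
  have hϖF : algebraMap 𝔬 F ϖ ≠ 0 :=
    (map_ne_zero_iff _ (FaithfulSMul.algebraMap_injective 𝔬 F)).mpr hϖ.ne_zero
  have h20 : (2 : 𝔬) ≠ 0 := by
    rw [← map_ne_zero_iff _ (FaithfulSMul.algebraMap_injective 𝔬 F), map_ofNat]
    exact two_ne_zero
  obtain ⟨e, u, h2⟩ := IsDiscreteValuationRing.eq_unit_mul_pow_irreducible h20 hϖ
  have hclose (μ : ℤ) (hμ : l + 3 * e + 1 ≤ μ) (B : Matrix (Fin n) (Fin n) F)
      (hB : IsHalfIntegral 𝔬 B) (hBdet : B.det ≠ 0)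
      (hBinv : IsHalfIntegral 𝔬 ((algebraMap 𝔬 F ϖ ^ l) • B⁻¹)) (A : Matrix (Fin n) (Fin n) F)
      (hA : IsHalfIntegral 𝔬 A) (hAB : ∀ i j, MemPiZ ϖ μ ((A - B) i j)) : GLEquiv 𝔬 B A :=
    .of_forall_sub_eq_eight_mul _ ((IsLocalRing.mem_maximalIdeal ϖ).mpr hϖ.not_isUnit) hϖF l
      hB hBdet hBinv hA fun i j => (hAB i j).exists_eq_eight_mul hϖF h2 hμ
  refine ⟨⟨(l + 3 * e + 1).toNat ⊔ 1, by omega,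
    fun B hB hBdet hBinv _ => hclose _ (by omega) B hB hBdet hBinv⟩,
    fun hq B hB hBdet hBinv _ => hclose (l + 1) ?_ B hB hBdet hBinv⟩
  have h2u : IsUnit (2 : 𝔬) := (IsLocalRing.residue_ne_zero_iff_isUnit 2).mp
    (by rw [map_ofNat]; exact two_ne_zero_of_odd_natCard hq)
  rw [h2, Units.isUnit_units_mul] at h2u
  have he : e = 0 := by
    by_contra he
    exact hϖ.not_isUnit ((isUnit_pow_iff he).mp h2u)
  simp [he]

theorem statement_11
    (𝔬 : Type) [CommRing 𝔬] [IsDomain 𝔬] [IsDiscreteValuationRing 𝔬]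
    [IsAdicComplete (IsLocalRing.maximalIdeal 𝔬) 𝔬]
    [Finite (IsLocalRing.ResidueField 𝔬)]
    (F : Type) [Field F] [Algebra 𝔬 F] [IsFractionRing 𝔬 F] [CharZero F]
    (ϖ : 𝔬) (hϖ : Irreducible ϖ)
    (n : ℕ) (l : ℤ) :
    (∃ lam : ℕ, 0 < lam ∧
      ∀ B : Matrix (Fin n) (Fin n) F, IsHalfIntegral 𝔬 B → B.det ≠ 0 →
        IsHalfIntegral 𝔬 ((algebraMap 𝔬 F ϖ ^ l) • B⁻¹) →
        (∀ l' : ℤ, l' < l → ¬ IsHalfIntegral 𝔬 ((algebraMap 𝔬 F ϖ ^ l') • B⁻¹)) →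
        ∀ A : Matrix (Fin n) (Fin n) F, IsHalfIntegral 𝔬 A →
          (∀ i j, MemPiZ ϖ (lam : ℤ) ((A - B) i j)) → GLEquiv 𝔬 B A) ∧
    (Odd (Nat.card (IsLocalRing.ResidueField 𝔬)) →
      ∀ B : Matrix (Fin n) (Fin n) F, IsHalfIntegral 𝔬 B → B.det ≠ 0 →
        IsHalfIntegral 𝔬 ((algebraMap 𝔬 F ϖ ^ l) • B⁻¹) →
        (∀ l' : ℤ, l' < l → ¬ IsHalfIntegral 𝔬 ((algebraMap 𝔬 F ϖ ^ l') • B⁻¹)) →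
        ∀ A : Matrix (Fin n) (Fin n) F, IsHalfIntegral 𝔬 A →
          (∀ i j, MemPiZ ϖ (l + 1) ((A - B) i j)) → GLEquiv 𝔬 B A) :=
  statement_11_general 𝔬 F ϖ hϖ n l

end
end

section
/- Assume q is even. Let K = (c_{ij}) ∈ 𝓗_2(𝔬) be a primitive unramified binary form (i.e. 2c_{12} ∈ 𝔬^×) with c_{11}c_{22} ∈ 𝔭. Then for any a, b ∈ 𝔬 with ab ∈ 𝔭, there exists U ∈ GL_2(𝔬) such that K[U] = [[a, 1/2],[1/2, b]]. -/
noncomputable section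

open Matrix

/-!
Since `2c₁₂` is a unit, rescaling the second basis vector makes the off-diagonal entry `1/2`, so
`K ≅ !![c, 1/2; 1/2, d']` with `cd' ∈ 𝔭`. It then suffices to show that every `!![a, 1/2; 1/2, b]`
with `ab ∈ 𝔭` is equivalent to the hyperbolic plane `!![0, 1/2; 1/2, 0]`. By Hensel's lemma
`X² - X + ab` has a root `z ∈ 𝔭`, and the vectors `(a, 1)` and `(1 - z, b / (1 - z))` are a basis
in which `xy` takes the values `a`, `b` with polar value `1/2`.
-/

open Polynomial IsLocalRing in
theorem exists_mul_one_sub_eq_of_mem_maximalIdeal {R : Type*} [CommRing R] [IsLocalRing R]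
    [HenselianRing R (maximalIdeal R)] {x : R} (hx : x ∈ maximalIdeal R) :
    ∃ z ∈ maximalIdeal R, z * (1 - z) = x := by
  have hmonic : (X ^ 2 - X + C x : R[X]).Monic := by monicity!
  have hder : IsUnit (Ideal.Quotient.mk (maximalIdeal R)
      ((X ^ 2 - X + C x : R[X]).derivative.eval 0)) := by simp
  obtain ⟨z, hroot, hz⟩ :=
    HenselianRing.is_henselian _ hmonic 0 (by simpa using hx) hder
  refine ⟨z, by simpa using hz, ?_⟩
  linear_combination (-1 : R) * (by simpa using hroot : z ^ 2 - z + x = 0)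

section GLEquiv

variable {𝔬 F ι : Type} [CommRing 𝔬] [Field F] [Algebra 𝔬 F] [Fintype ι] [DecidableEq ι]

theorem GLEquiv.trans {A B C : Matrix ι ι F} (hAB : GLEquiv 𝔬 A B) (hBC : GLEquiv 𝔬 B C) :
    GLEquiv 𝔬 A C := by
  obtain ⟨U, hU, rfl⟩ := hAB
  obtain ⟨V, hV, rfl⟩ := hBC
  refine ⟨U * V, by simpa only [det_mul] using hU.mul hV, ?_⟩
  simp only [Matrix.map_mul, transpose_mul, Matrix.mul_assoc]

theorem GLEquiv.symm {A B : Matrix ι ι F} (h : GLEquiv 𝔬 A B) : GLEquiv 𝔬 B A := by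
  obtain ⟨U, hU, rfl⟩ := h
  have hUinv : U.map (algebraMap 𝔬 F) * U⁻¹.map (algebraMap 𝔬 F) = 1 := by
    rw [← Matrix.map_mul, mul_nonsing_inv U hU, Matrix.map_one _ (map_zero _) (map_one _)]
  refine ⟨U⁻¹, isUnit_nonsing_inv_det U hU, ?_⟩
  calc A = (U.map (algebraMap 𝔬 F) * U⁻¹.map (algebraMap 𝔬 F))ᵀ * A *
        (U.map (algebraMap 𝔬 F) * U⁻¹.map (algebraMap 𝔬 F)) := by simp [hUinv]
    _ = _ := by simp only [transpose_mul, Matrix.mul_assoc]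

end GLEquiv

theorem transpose_mul_fin_two_mul {R : Type*} [CommRing R] (x y z p r s t : R) :
    (!![p, r; s, t])ᵀ * !![x, y; y, z] * !![p, r; s, t] =
      !![x * p ^ 2 + 2 * y * p * s + z * s ^ 2, x * p * r + y * (p * t + r * s) + z * s * t;
        x * p * r + y * (p * t + r * s) + z * s * t, x * r ^ 2 + 2 * y * r * t + z * t ^ 2] := by
  ext i j
  fin_cases i <;> fin_cases j <;> simp [Matrix.mul_apply, Fin.sum_univ_two] <;> ring

variable {𝔬 F : Type} [CommRing 𝔬] [Field F] [Algebra 𝔬 F]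

open IsLocalRing in
theorem glEquiv_hyperbolic [IsLocalRing 𝔬] [HenselianRing 𝔬 (maximalIdeal 𝔬)]
    (h2 : (2 : F) ≠ 0) {a b : 𝔬} (hab : a * b ∈ maximalIdeal 𝔬) :
    GLEquiv 𝔬 !![0, (2 : F)⁻¹; (2 : F)⁻¹, 0]
      !![algebraMap 𝔬 F a, (2 : F)⁻¹; (2 : F)⁻¹, algebraMap 𝔬 F b] := by
  obtain ⟨z, hz, hzab⟩ := exists_mul_one_sub_eq_of_mem_maximalIdeal hab
  obtain ⟨w, haw, hzw⟩ : ∃ w, a * w = z ∧ (1 - z) * w = b := by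
    obtain ⟨v, hv⟩ : IsUnit (1 - z) := isUnit_one_sub_self_of_mem_nonunits z hz
    refine ⟨b * ↑v⁻¹, ?_, ?_⟩
    · rw [← mul_assoc, ← hzab, ← hv, mul_assoc, Units.mul_inv, mul_one]
    · rw [← hv, mul_left_comm, Units.mul_inv, mul_one]
  refine ⟨!![a, 1 - z; 1, w], ?_, ?_⟩
  · have hdet : a * w - (1 - z) * 1 = -(1 - (z + z)) := by rw [haw]; ring
    rw [det_fin_two_of, hdet]
    exact (isUnit_one_sub_self_of_mem_nonunits _ (Ideal.add_mem _ hz hz)).neg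
  · have haw' := congrArg (algebraMap 𝔬 F) haw
    have hzw' := congrArg (algebraMap 𝔬 F) hzw
    simp only [map_mul, map_sub, map_one] at haw' hzw'
    rw [eta_fin_two (Matrix.map _ _), transpose_mul_fin_two_mul]
    ext i j
    fin_cases i <;> fin_cases j <;> simp [h2, haw', ← hzw']

theorem glEquiv_offDiag_half {K : Matrix (Fin 2) (Fin 2) F} (hK : K.IsSymm) {c d : 𝔬} (u : 𝔬ˣ)
    (hc : K 0 0 = algebraMap 𝔬 F c) (hd : K 1 1 = algebraMap 𝔬 F d)
    (hu : 2 * K 0 1 = algebraMap 𝔬 F u) :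
    GLEquiv 𝔬 K !![algebraMap 𝔬 F c, (2 : F)⁻¹; (2 : F)⁻¹, algebraMap 𝔬 F (d * ↑u⁻¹ ^ 2)] := by
  have hK10 : K 1 0 = K 0 1 := hK.apply 0 1
  have hKu : K 0 1 * algebraMap 𝔬 F ↑u⁻¹ = (2 : F)⁻¹ := by
    refine (inv_eq_of_mul_eq_one_right ?_).symm
    rw [← mul_assoc, hu, ← map_mul, Units.mul_inv, map_one]
  refine ⟨!![1, 0; 0, ↑u⁻¹], by simp, ?_⟩
  rw [eta_fin_two K, hK10, eta_fin_two (Matrix.map _ _), transpose_mul_fin_two_mul]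
  ext i j
  fin_cases i <;> fin_cases j <;> simp [hc, hd, ← hKu]

open IsLocalRing in
theorem statement_17_general
    (𝔬 : Type) [CommRing 𝔬] [IsDomain 𝔬] [IsDiscreteValuationRing 𝔬]
    [IsAdicComplete (IsLocalRing.maximalIdeal 𝔬) 𝔬]
    (F : Type) [Field F] [Algebra 𝔬 F] [IsFractionRing 𝔬 F]
    (ϖ : 𝔬) (hϖ : Irreducible ϖ)
    (K : Matrix (Fin 2) (Fin 2) F) (hK : IsHalfIntegral 𝔬 K)
    (hprim : ∃ d : 𝔬, IsUnit d ∧ 2 * K 0 1 = algebraMap 𝔬 F d)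
    (hdiag : MemPi ϖ 1 (K 0 0 * K 1 1))
    (a b : 𝔬) (hab : ϖ ∣ a * b) :
    ∃ U : Matrix (Fin 2) (Fin 2) 𝔬, IsUnit U.det ∧
      (U.map (algebraMap 𝔬 F))ᵀ * K * U.map (algebraMap 𝔬 F) =
        !![algebraMap 𝔬 F a, (2 : F)⁻¹; (2 : F)⁻¹, algebraMap 𝔬 F b] := by
  obtain ⟨hsymm, hdiagInt, -⟩ := hK
  obtain ⟨c, hc⟩ := hdiagInt 0
  obtain ⟨d, hd⟩ := hdiagInt 1
  obtain ⟨_, ⟨u, rfl⟩, hu⟩ := hprim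
  obtain ⟨e, he⟩ := hdiag
  have h2 : (2 : F) ≠ 0 := left_ne_zero_of_mul (hu ▸ (u.isUnit.map (algebraMap 𝔬 F)).ne_zero)
  have hϖ_mem : ϖ ∈ maximalIdeal 𝔬 := hϖ.not_isUnit
  have hcd : c * (d * ↑u⁻¹ ^ 2) ∈ maximalIdeal 𝔬 := by
    have hcd_eq : c * d = ϖ * e :=
      IsFractionRing.injective 𝔬 F (by rw [map_mul, ← hc, ← hd, he, pow_one])
    rw [← mul_assoc, hcd_eq, mul_assoc]
    exact Ideal.mul_mem_right _ _ hϖ_mem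
  obtain ⟨U, hU, hKU⟩ := (glEquiv_offDiag_half hsymm u hc hd hu).trans
    ((glEquiv_hyperbolic h2 hcd).symm.trans (glEquiv_hyperbolic h2 (Ideal.mem_of_dvd _ hab hϖ_mem)))
  exact ⟨U, hU, hKU.symm⟩

theorem statement_17
    (𝔬 : Type) [CommRing 𝔬] [IsDomain 𝔬] [IsDiscreteValuationRing 𝔬]
    [IsAdicComplete (IsLocalRing.maximalIdeal 𝔬) 𝔬]
    [Finite (IsLocalRing.ResidueField 𝔬)]
    (F : Type) [Field F] [Algebra 𝔬 F] [IsFractionRing 𝔬 F] [CharZero F]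
    (ϖ : 𝔬) (hϖ : Irreducible ϖ)
    (hq : Even (Nat.card (IsLocalRing.ResidueField 𝔬)))
    (K : Matrix (Fin 2) (Fin 2) F) (hK : IsHalfIntegral 𝔬 K)
    (hprim : ∃ d : 𝔬, IsUnit d ∧ 2 * K 0 1 = algebraMap 𝔬 F d)
    (hdiag : MemPi ϖ 1 (K 0 0 * K 1 1))
    (a b : 𝔬) (hab : ϖ ∣ a * b) :
    ∃ U : Matrix (Fin 2) (Fin 2) 𝔬, IsUnit U.det ∧
      (U.map (algebraMap 𝔬 F))ᵀ * K * U.map (algebraMap 𝔬 F) =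
        !![algebraMap 𝔬 F a, (2 : F)⁻¹; (2 : F)⁻¹, algebraMap 𝔬 F b] :=
  statement_17_general 𝔬 F ϖ hϖ K hK hprim hdiag a b hab

end
end
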